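/- Let γ be a modular bridge from Ω_A to Ω_B. For every ε > 0 there exists a modular bridge γ_ε from Ω_A to Ω_B, with the same unital C*-algebra D, pivot x, and unital *-monomorphisms π_A, π_B as γ, whose families of anchors and co-anchors are finite, and such that λ(γ_ε) ≤ λ(γ) + ε. -/

import Mathlib

open scoped ComplexOrder

noncomputable section

/-! ### Admissible functions -/

/-- A function `F : [0,∞)⁴ → [0,∞)` is admissible when it is nondecreasing in each argument
and dominates `x₁x₃ + x₂x₄`. -/
def Admissible (F : ℝ → ℝ → ℝ → ℝ → ℝ) : Prop :=
  (∀ x₁ x₂ x₃ x₄ y₁ y₂ y₃ y₄ : ℝ, 0 ≤ x₁ → 0 ≤ x₂ → 0 ≤ x₃ → 0 ≤ x₄ →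
      x₁ ≤ y₁ → x₂ ≤ y₂ → x₃ ≤ y₃ → x₄ ≤ y₄ → F x₁ x₂ x₃ x₄ ≤ F y₁ y₂ y₃ y₄) ∧
  (∀ x₁ x₂ x₃ x₄ : ℝ, 0 ≤ x₁ → 0 ≤ x₂ → 0 ≤ x₃ → 0 ≤ x₄ →
      x₁ * x₃ + x₂ * x₄ ≤ F x₁ x₂ x₃ x₄)

/-- An admissible triple `(F,G,H)`. -/
def AdmissibleTriple (F : ℝ → ℝ → ℝ → ℝ → ℝ) (G : ℝ → ℝ → ℝ → ℝ) (H : ℝ → ℝ → ℝ) : Prop :=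
  Admissible F ∧
  (∀ x y z x' y' z' : ℝ, 0 ≤ x → 0 ≤ y → 0 ≤ z → x ≤ x' → y ≤ y' → z ≤ z' →
      G x y z ≤ G x' y' z') ∧
  (∀ x y z : ℝ, 0 ≤ x → 0 ≤ y → 0 ≤ z → (x + y) * z ≤ G x y z) ∧
  (∀ x y x' y' : ℝ, 0 ≤ x → 0 ≤ y → x ≤ x' → y ≤ y' → H x y ≤ H x' y') ∧
  (∀ x y : ℝ, 0 ≤ x → 0 ≤ y → 2 * x * y ≤ H x y)

section ReIm

variable {A : Type*} [NormedRing A] [StarRing A] [NormedAlgebra ℂ A]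

/-- The real part `(a + a*)/2` of an element of a complex `*`-algebra. -/
def reEl (a : A) : A := (2⁻¹ : ℂ) • (a + star a)

/-- The imaginary part `(a - a*)/(2i)` of an element of a complex `*`-algebra. -/
def imEl (a : A) : A := ((2 * Complex.I)⁻¹ : ℂ) • (a - star a)

end ReIm

/-! ### States -/

/-- A state on a unital complex `*`-algebra: a linear functional which is unital
and positive. -/
structure CState (A : Type*) [NormedRing A] [StarRing A] [NormedAlgebra ℂ A] where
  toFun : A →ₗ[ℂ] ℂ
  map_one : toFun 1 = 1
  positive : ∀ a : A, 0 ≤ toFun (star a * a)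

/-- The topology induced by a distance function, generated by its open balls. -/
def ballTopology {X : Type*} (d : X → X → ℝ) : TopologicalSpace X :=
  TopologicalSpace.generateFrom {s | ∃ (x : X) (ε : ℝ), 0 < ε ∧ s = {y | d x y < ε}}

/-- The Hausdorff distance between two sets, relative to a distance function. -/
def hausDist {X : Type*} (d : X → X → ℝ) (S T : Set X) : ℝ :=
  max (sSup {r | ∃ x ∈ S, r = sInf {s | ∃ y ∈ T, s = d x y}})
      (sSup {r | ∃ y ∈ T, r = sInf {s | ∃ x ∈ S, s = d x y}})

/-- The diameter of a set relative to a distance function. -/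
def setDiam {X : Type*} (d : X → X → ℝ) (S : Set X) : ℝ :=
  sSup {r | ∃ x ∈ S, ∃ y ∈ S, r = d x y}

/-- The weak-* topology on the state space. -/
def stateWeakTopology (A : Type*) [NormedRing A] [StarRing A] [NormedAlgebra ℂ A] :
    TopologicalSpace (CState A) :=
  TopologicalSpace.induced (fun (φ : CState A) (a : A) => φ.toFun a) Pi.topologicalSpace

/-- The Monge-Kantorovich metric associated with a Lipschitz seminorm `L` with domain `dom`. -/
def mkDist {A : Type*} [NormedRing A] [StarRing A] [NormedAlgebra ℂ A]
    (dom : Set A) (L : A → ℝ) (φ ψ : CState A) : ℝ :=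
  sSup {r | ∃ a ∈ dom, L a ≤ 1 ∧ r = ‖φ.toFun a - ψ.toFun a‖}

/-- The 1-level set of a pivot is nonempty. -/
def pivotLevelNonempty {D : Type*} [NormedRing D] [StarRing D] [NormedAlgebra ℂ D]
    (x : D) : Prop :=
  ∃ φ : CState D,
    φ.toFun (star (1 - x) * (1 - x)) = 0 ∧ φ.toFun ((1 - x) * star (1 - x)) = 0

/-! ### Quasi-Leibniz quantum compact metric spaces -/

/-- An `F`-quasi-Leibniz quantum compact metric space structure on a unital C*-algebra `A`:
a Lipschitz seminorm `L` defined on a dense Jordan-Lie subalgebra `dom` of the self-adjoint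
part of `A`, vanishing exactly on `ℝ1`, lower semicontinuous, whose Monge-Kantorovich metric
metrizes the weak-* topology on the state space, and satisfying the `F`-quasi-Leibniz
inequality. -/
structure QLSpace (A : Type*) [NormedRing A] [StarRing A] [CStarRing A]
    [NormedAlgebra ℂ A] [StarModule ℂ A] [CompleteSpace A]
    (F : ℝ → ℝ → ℝ → ℝ → ℝ) where
  dom : Set A
  L : A → ℝ
  dom_selfAdjoint : ∀ a ∈ dom, IsSelfAdjoint a
  dom_dense : closure dom = {a : A | IsSelfAdjoint a}
  dom_add : ∀ a ∈ dom, ∀ b ∈ dom, a + b ∈ dom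
  dom_smul : ∀ (t : ℝ), ∀ a ∈ dom, (t : ℂ) • a ∈ dom
  dom_jordan : ∀ a ∈ dom, ∀ b ∈ dom, (2⁻¹ : ℂ) • (a * b + b * a) ∈ dom
  dom_lie : ∀ a ∈ dom, ∀ b ∈ dom, ((2 * Complex.I)⁻¹ : ℂ) • (a * b - b * a) ∈ dom
  one_mem : (1 : A) ∈ dom
  L_nonneg : ∀ a : A, 0 ≤ L a
  L_add : ∀ a ∈ dom, ∀ b ∈ dom, L (a + b) ≤ L a + L b
  L_smul : ∀ (t : ℝ), ∀ a ∈ dom, L ((t : ℂ) • a) = |t| * L a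
  L_eq_zero_iff : ∀ a ∈ dom, (L a = 0 ↔ ∃ t : ℝ, a = (t : ℂ) • (1 : A))
  lowerSemicontinuous : IsClosed {a : A | a ∈ dom ∧ L a ≤ 1}
  leibniz_jordan : ∀ a ∈ dom, ∀ b ∈ dom,
      L ((2⁻¹ : ℂ) • (a * b + b * a)) ≤ F ‖a‖ ‖b‖ (L a) (L b)
  leibniz_lie : ∀ a ∈ dom, ∀ b ∈ dom,
      L (((2 * Complex.I)⁻¹ : ℂ) • (a * b - b * a)) ≤ F ‖a‖ ‖b‖ (L a) (L b)
  mk_metrizes : ballTopology (mkDist dom L) = stateWeakTopology A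
/-! ### Metrized quantum vector bundles -/

/-- An `(F,G,H)`-metrized quantum vector bundle: a left Hilbert module `M` over a unital
C*-algebra `A` equipped with an `F`-quasi-Leibniz quantum compact metric space structure,
together with a D-norm `D` defined on a dense subspace `Ddom` of `M`, dominating the
C*-Hilbert norm, with compact unit ball, and satisfying the inner and modular quasi-Leibniz
inequalities with respect to `G` and `H`. -/
structure BundledMQVB (F : ℝ → ℝ → ℝ → ℝ → ℝ) (G : ℝ → ℝ → ℝ → ℝ) (H : ℝ → ℝ → ℝ) where
  A : Type
  [instRing : NormedRing A]
  [instStarRing : StarRing A]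
  [instCStar : CStarRing A]
  [instAlg : NormedAlgebra ℂ A]
  [instStarMod : StarModule ℂ A]
  [instComplete : CompleteSpace A]
  M : Type
  [instM : NormedAddCommGroup M]
  [instMC : Module ℂ M]
  [instMA : Module A M]
  [instTower : IsScalarTower ℂ A M]
  [instMComplete : CompleteSpace M]
  base : QLSpace A F
  inn : M → M → A
  Ddom : Set M
  D : M → ℝ
  inn_add_left : ∀ x y z : M, inn (x + y) z = inn x z + inn y z
  inn_smul_left : ∀ (a : A) (x y : M), inn (a • x) y = a * inn x y
  inn_smul_leftC : ∀ (c : ℂ) (x y : M), inn (c • x) y = c • inn x y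
  inn_star : ∀ x y : M, star (inn x y) = inn y x
  inn_pos : ∀ x : M, ∃ b : A, inn x x = star b * b
  inn_definite : ∀ x : M, inn x x = 0 → x = 0
  norm_eq : ∀ x : M, ‖x‖ = Real.sqrt ‖inn x x‖
  Ddom_dense : Dense Ddom
  Ddom_add : ∀ x ∈ Ddom, ∀ y ∈ Ddom, x + y ∈ Ddom
  Ddom_smul : ∀ (c : ℂ), ∀ x ∈ Ddom, c • x ∈ Ddom
  D_nonneg : ∀ x : M, 0 ≤ D x
  D_add : ∀ x ∈ Ddom, ∀ y ∈ Ddom, D (x + y) ≤ D x + D y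
  D_smul : ∀ (c : ℂ), ∀ x ∈ Ddom, D (c • x) = ‖c‖ * D x
  norm_le_D : ∀ x ∈ Ddom, ‖x‖ ≤ D x
  D_ball_compact : IsCompact {x : M | x ∈ Ddom ∧ D x ≤ 1}
  D_leibniz : ∀ a ∈ base.dom, ∀ x ∈ Ddom,
      a • x ∈ Ddom ∧ D (a • x) ≤ G ‖a‖ (base.L a) (D x)
  inn_leibniz : ∀ x ∈ Ddom, ∀ y ∈ Ddom,
      reEl (inn x y) ∈ base.dom ∧ imEl (inn x y) ∈ base.dom ∧
      base.L (reEl (inn x y)) ≤ H (D x) (D y) ∧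
      base.L (imEl (inn x y)) ≤ H (D x) (D y)

attribute [instance] BundledMQVB.instRing BundledMQVB.instStarRing BundledMQVB.instCStar
  BundledMQVB.instAlg BundledMQVB.instStarMod BundledMQVB.instComplete
  BundledMQVB.instM BundledMQVB.instMC BundledMQVB.instMA BundledMQVB.instTower
  BundledMQVB.instMComplete

variable {F : ℝ → ℝ → ℝ → ℝ → ℝ} {G : ℝ → ℝ → ℝ → ℝ} {H : ℝ → ℝ → ℝ}

/-- The closed ball of radius `r` for the D-norm of a metrized quantum vector bundle. -/
def BundledMQVB.Dball (Ω : BundledMQVB F G H) (r : ℝ) : Set Ω.M :=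
  {ω | ω ∈ Ω.Ddom ∧ Ω.D ω ≤ r}

/-- The modular Monge-Kantorovich metric of a metrized quantum vector bundle. -/
def BundledMQVB.mkD (Ω : BundledMQVB F G H) (x y : Ω.M) : ℝ :=
  sSup {r | ∃ ξ ∈ Ω.Ddom, Ω.D ξ ≤ 1 ∧ r = ‖Ω.inn x ξ - Ω.inn y ξ‖}

/-- The `A`-weak topology on the module of a metrized quantum vector bundle. -/
def BundledMQVB.aWeak (Ω : BundledMQVB F G H) : TopologicalSpace Ω.M :=
  TopologicalSpace.induced (fun (ω : Ω.M) (ξ : Ω.M) => Ω.inn ω ξ) Pi.topologicalSpace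
/-! ### Modular bridges -/

/-- A modular bridge between two metrized quantum vector bundles. -/
structure ModularBridge (ΩA ΩB : BundledMQVB F G H) where
  Dalg : Type
  [instDRing : NormedRing Dalg]
  [instDStarRing : StarRing Dalg]
  [instDCStar : CStarRing Dalg]
  [instDAlg : NormedAlgebra ℂ Dalg]
  [instDStarMod : StarModule ℂ Dalg]
  [instDComplete : CompleteSpace Dalg]
  J : Type
  [instJ : Nonempty J]
  pivot : Dalg
  piA : ΩA.A →⋆ₐ[ℂ] Dalg
  piB : ΩB.A →⋆ₐ[ℂ] Dalg
  piA_inj : Function.Injective piA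
  piB_inj : Function.Injective piB
  pivot_norm : ‖pivot‖ = 1
  levelSet_nonempty : pivotLevelNonempty pivot
  anchors : J → ΩA.M
  coanchors : J → ΩB.M
  anchors_mem : ∀ j, anchors j ∈ ΩA.Ddom
  anchors_le : ∀ j, ΩA.D (anchors j) ≤ 1
  coanchors_mem : ∀ j, coanchors j ∈ ΩB.Ddom
  coanchors_le : ∀ j, ΩB.D (coanchors j) ≤ 1

attribute [instance] ModularBridge.instDRing ModularBridge.instDStarRing
  ModularBridge.instDCStar ModularBridge.instDAlg ModularBridge.instDStarMod
  ModularBridge.instDComplete ModularBridge.instJ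

namespace ModularBridge

variable {ΩA ΩB : BundledMQVB F G H}

/-- The bridge seminorm of a modular bridge. -/
def bn (γ : ModularBridge ΩA ΩB) (a : ΩA.A) (b : ΩB.A) : ℝ :=
  ‖γ.piA a * γ.pivot - γ.pivot * γ.piB b‖

/-- The deck seminorm of a modular bridge. -/
def dn (γ : ModularBridge ΩA ΩB) (ω : ΩA.M) (η : ΩB.M) : ℝ :=
  ⨆ k : γ.J,
    max (γ.bn (ΩA.inn ω (γ.anchors k)) (ΩB.inn η (γ.coanchors k)))
        (γ.bn (ΩA.inn (γ.anchors k) ω) (ΩB.inn (γ.coanchors k) η))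

/-- The basic reach of a modular bridge. -/
def basicReach (γ : ModularBridge ΩA ΩB) : ℝ :=
  max
    (sSup {r | ∃ a ∈ ΩA.base.dom, ΩA.base.L a ≤ 1 ∧
        r = sInf {s | ∃ b ∈ ΩB.base.dom, ΩB.base.L b ≤ 1 ∧ s = γ.bn a b}})
    (sSup {r | ∃ b ∈ ΩB.base.dom, ΩB.base.L b ≤ 1 ∧
        r = sInf {s | ∃ a ∈ ΩA.base.dom, ΩA.base.L a ≤ 1 ∧ s = γ.bn a b}})

/-- The modular reach of a modular bridge. -/
def modularReach (γ : ModularBridge ΩA ΩB) : ℝ :=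
  ⨆ j : γ.J, γ.dn (γ.anchors j) (γ.coanchors j)

/-- The imprint of a modular bridge. -/
def imprint (γ : ModularBridge ΩA ΩB) : ℝ :=
  max (hausDist ΩA.mkD (Set.range γ.anchors) (ΩA.Dball 1))
      (hausDist ΩB.mkD (Set.range γ.coanchors) (ΩB.Dball 1))

/-- The reach of a modular bridge. -/
def reach (γ : ModularBridge ΩA ΩB) : ℝ :=
  max γ.basicReach (γ.modularReach + γ.imprint)

/-- The states of the bridge algebra in the 1-level set of the pivot. -/
def levelStates (γ : ModularBridge ΩA ΩB) : Set (CState γ.Dalg) :=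
  {φ | φ.toFun (star (1 - γ.pivot) * (1 - γ.pivot)) = 0 ∧
       φ.toFun ((1 - γ.pivot) * star (1 - γ.pivot)) = 0}

/-- The height of a modular bridge. -/
def height (γ : ModularBridge ΩA ΩB) : ℝ :=
  max
    (hausDist (mkDist ΩA.base.dom ΩA.base.L) (Set.univ : Set (CState ΩA.A))
      {ψ | ∃ φ ∈ γ.levelStates, ∀ a : ΩA.A, ψ.toFun a = φ.toFun (γ.piA a)})
    (hausDist (mkDist ΩB.base.dom ΩB.base.L) (Set.univ : Set (CState ΩB.A))
      {ψ | ∃ φ ∈ γ.levelStates, ∀ b : ΩB.A, ψ.toFun b = φ.toFun (γ.piB b)})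

/-- The length of a modular bridge. -/
def length (γ : ModularBridge ΩA ΩB) : ℝ := max γ.reach γ.height

/-- The `l`-modular target set of `ω` for a modular bridge. -/
def mtarget (γ : ModularBridge ΩA ΩB) (ω : ΩA.M) (l : ℝ) : Set ΩB.M :=
  {η | η ∈ ΩB.Ddom ∧ ΩB.D η ≤ l ∧ γ.dn ω η ≤ l * γ.reach}

/-- The `l`-target set of `a` for a modular bridge. -/
def atarget (γ : ModularBridge ΩA ΩB) (a : ΩA.A) (l : ℝ) : Set ΩB.A :=
  {b | b ∈ ΩB.base.dom ∧ ΩB.base.L b ≤ l ∧ γ.bn a b ≤ l * γ.basicReach}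

/-- The reverse of a modular bridge. -/
def reverse (γ : ModularBridge ΩA ΩB) : ModularBridge ΩB ΩA where
  Dalg := γ.Dalg
  J := γ.J
  pivot := star γ.pivot
  piA := γ.piB
  piB := γ.piA
  piA_inj := γ.piB_inj
  piB_inj := γ.piA_inj
  pivot_norm := by rw [norm_star]; exact γ.pivot_norm
  levelSet_nonempty := by
    obtain ⟨φ, h1, h2⟩ := γ.levelSet_nonempty
    refine ⟨φ, ?_, ?_⟩
    · have e1 : star ((1 : γ.Dalg) - star γ.pivot) = 1 - γ.pivot := by
        simp [star_sub]
      have e2 : (1 : γ.Dalg) - star γ.pivot = star (1 - γ.pivot) := by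
        simp [star_sub]
      rw [e1, e2]; exact h2
    · have e1 : star ((1 : γ.Dalg) - star γ.pivot) = 1 - γ.pivot := by
        simp [star_sub]
      have e2 : (1 : γ.Dalg) - star γ.pivot = star (1 - γ.pivot) := by
        simp [star_sub]
      rw [e1, e2]; exact h1
  anchors := γ.coanchors
  coanchors := γ.anchors
  anchors_mem := γ.coanchors_mem
  anchors_le := γ.coanchors_le
  coanchors_mem := γ.anchors_mem
  coanchors_le := γ.anchors_le

end ModularBridge

/-! ### Modular treks -/

/-- A modular trek: a finite chain of composable modular bridges. -/
inductive Trek (F : ℝ → ℝ → ℝ → ℝ → ℝ) (G : ℝ → ℝ → ℝ → ℝ) (H : ℝ → ℝ → ℝ) :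
    BundledMQVB F G H → BundledMQVB F G H → Type 1
  | single {ΩA ΩB : BundledMQVB F G H} (γ : ModularBridge ΩA ΩB) : Trek F G H ΩA ΩB
  | cons {ΩA ΩB ΩC : BundledMQVB F G H} (γ : ModularBridge ΩA ΩB)
      (Γ : Trek F G H ΩB ΩC) : Trek F G H ΩA ΩC

namespace Trek

/-- The length of a modular trek: the sum of the lengths of its bridges. -/
def length : ∀ {ΩA ΩB : BundledMQVB F G H}, Trek F G H ΩA ΩB → ℝ
  | _, _, .single γ => γ.length
  | _, _, .cons γ Γ => γ.length + Trek.length Γ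

/-- The modular target set of a modular trek (the set of endpoints of `l`-itineraries). -/
def mtarget : ∀ {ΩA ΩB : BundledMQVB F G H}, Trek F G H ΩA ΩB → ΩA.M → ℝ → Set ΩB.M
  | _, _, .single γ, ω, l => γ.mtarget ω l
  | _, _, .cons γ Γ, ω, l => {η | ∃ ξ ∈ γ.mtarget ω l, η ∈ Trek.mtarget Γ ξ l}

/-- The target set of a modular trek on the base algebras. -/
def atarget : ∀ {ΩA ΩB : BundledMQVB F G H}, Trek F G H ΩA ΩB → ΩA.A → ℝ → Set ΩB.A
  | _, _, .single γ, a, l => γ.atarget a l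
  | _, _, .cons γ Γ, a, l => {b | ∃ c ∈ γ.atarget a l, b ∈ Trek.atarget Γ c l}

end Trek

/-!
The anchor/co-anchor pairs lie in the product of the two D-unit balls, which is norm-compact, so
finitely many of them are `ε`-dense among all of them. Restricting the bridge to those indices does
not touch the basic reach or the height, can only shrink the modular reach (a supremum over fewer
anchors), and raises the imprint by at most `ε`: by Cauchy–Schwarz the modular Monge–Kantorovich
metric is dominated by the module norm.
-/

theorem exists_finite_net_of_totallyBounded_range {ι α : Type*} [PseudoMetricSpace α]
    {f : ι → α} (hf : TotallyBounded (Set.range f)) {ε : ℝ} (hε : 0 < ε) :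
    ∃ s : Set ι, s.Finite ∧ ∀ i, ∃ j ∈ s, dist (f i) (f j) < ε := by
  rw [← Set.image_univ] at hf
  obtain ⟨s, -, hs, hcov⟩ :=
    Set.exists_subset_image_finite_and.1 (Metric.finite_approx_of_totallyBounded hf ε hε)
  refine ⟨s, hs, fun i => ?_⟩
  obtain ⟨_, ⟨j, hj, rfl⟩, hij⟩ :=
    Set.mem_iUnion₂.1 (hcov (Set.mem_image_of_mem f (Set.mem_univ i)))
  exact ⟨j, hj, hij⟩

theorem hausDist_le_hausDist_add_of_net {X : Type*} {d : X → X → ℝ} {S S' T : Set X}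
    {C ε : ℝ} (hd : ∀ x y, 0 ≤ d x y) (hd_self : ∀ x, d x x = 0) (hS'T : S' ⊆ T)
    (hSne : S.Nonempty) (hC : ∀ x ∈ S, ∀ y ∈ T, d x y ≤ C) (hε : 0 ≤ ε)
    (hnet : ∀ x ∈ S, ∃ x' ∈ S', ∀ y ∈ T, d x' y ≤ d x y + ε) :
    hausDist d S' T ≤ hausDist d S T + ε := by
  have hinf_nonneg : ∀ (U : Set X) y, 0 ≤ sInf {s | ∃ x ∈ U, s = d x y} := fun U y =>
    Real.sInf_nonneg (by rintro _ ⟨x, -, rfl⟩; exact hd x y)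
  have hbelow : ∀ (U : Set X) y, BddBelow {s | ∃ x ∈ U, s = d x y} := fun U y =>
    ⟨0, by rintro _ ⟨x, -, rfl⟩; exact hd x y⟩
  have hbelow' : ∀ x, BddBelow {s | ∃ y ∈ T, s = d x y} := fun x =>
    ⟨0, by rintro _ ⟨y, -, rfl⟩; exact hd x y⟩
  have hhaus_nonneg : 0 ≤ hausDist d S T :=
    le_max_of_le_right (Real.sSup_nonneg (by rintro _ ⟨y, -, rfl⟩; exact hinf_nonneg S y))
  refine max_le ?_ (Real.sSup_le ?_ (by linarith))
  · refine (Real.sSup_nonpos ?_).trans (by linarith)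
    rintro _ ⟨x, hx, rfl⟩
    exact csInf_le (hbelow' x) ⟨x, hS'T hx, (hd_self x).symm⟩
  · rintro _ ⟨y, hy, rfl⟩
    have hstep : sInf {s | ∃ x ∈ S', s = d x y} ≤ sInf {s | ∃ x ∈ S, s = d x y} + ε := by
      rw [← sub_le_iff_le_add]
      obtain ⟨x₀, hx₀⟩ := hSne
      refine le_csInf ⟨_, x₀, hx₀, rfl⟩ ?_
      rintro _ ⟨x, hx, rfl⟩
      obtain ⟨x', hx', hxx'⟩ := hnet x hx
      exact sub_le_iff_le_add.2 ((csInf_le (hbelow S' y) ⟨x', hx', rfl⟩).trans (hxx' y hy))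
    have habove : BddAbove {r | ∃ y ∈ T, r = sInf {s | ∃ x ∈ S, s = d x y}} := by
      obtain ⟨x₀, hx₀⟩ := hSne
      refine ⟨C, ?_⟩
      rintro _ ⟨y', hy', rfl⟩
      exact (csInf_le (hbelow S y') ⟨x₀, hx₀, rfl⟩).trans (hC x₀ hx₀ y' hy')
    exact hstep.trans <|
      add_le_add_left ((le_csSup habove ⟨y, hy, rfl⟩).trans (le_max_right _ _)) ε

namespace BundledMQVB

variable (Ω : BundledMQVB F G H)

theorem inn_sub_left (x y z : Ω.M) : Ω.inn (x - y) z = Ω.inn x z - Ω.inn y z :=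
  map_sub (AddMonoidHom.mk' (fun x => Ω.inn x z) fun x y => Ω.inn_add_left x y z) x y

theorem norm_inn_le (x y : Ω.M) : ‖Ω.inn x y‖ ≤ ‖x‖ * ‖y‖ := by
  let : CStarAlgebra Ω.A := {}
  let : PartialOrder Ω.A := CStarAlgebra.spectralOrder Ω.A
  have : StarOrderedRing Ω.A := CStarAlgebra.spectralOrderedRing Ω.A
  -- `⟪x, y⟫ := inn y x` turns `M` into a Hilbert C⋆-module in Mathlib's convention.
  let : CStarModule Ω.A Ω.M :=
    { inner := fun x y => Ω.inn y x
      inner_add_right := Ω.inn_add_left _ _ _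
      inner_self_nonneg := by
        intro x
        obtain ⟨b, hb⟩ := Ω.inn_pos x
        exact hb ▸ star_mul_self_nonneg b
      inner_self := by
        intro x
        refine ⟨Ω.inn_definite x, ?_⟩
        rintro rfl
        simpa using Ω.inn_smul_leftC 0 0 0
      inner_op_smul_right := Ω.inn_smul_left _ _ _
      inner_smul_right_complex := Ω.inn_smul_leftC _ _ _
      star_inner := fun x y => Ω.inn_star y x
      norm_eq_sqrt_norm_inner_self := Ω.norm_eq }
  rw [mul_comm]
  exact CStarModule.norm_inner_le Ω.M (A := Ω.A) (x := y) (y := x)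

theorem norm_le_one_of_mem_Dball {ω : Ω.M} (h : ω ∈ Ω.Dball 1) : ‖ω‖ ≤ 1 :=
  (Ω.norm_le_D ω h.1).trans h.2

theorem norm_inn_le_one {ω ω' : Ω.M} (hω : ω ∈ Ω.Dball 1) (hω' : ω' ∈ Ω.Dball 1) :
    ‖Ω.inn ω ω'‖ ≤ 1 :=
  (Ω.norm_inn_le ω ω').trans <| mul_le_one₀ (Ω.norm_le_one_of_mem_Dball hω) (norm_nonneg _)
    (Ω.norm_le_one_of_mem_Dball hω')

theorem norm_inn_sub_inn_le {ξ : Ω.M} (hξ : ξ ∈ Ω.Dball 1) (x y : Ω.M) :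
    ‖Ω.inn x ξ - Ω.inn y ξ‖ ≤ ‖x - y‖ := by
  rw [← Ω.inn_sub_left]
  exact (Ω.norm_inn_le _ _).trans <|
    mul_le_of_le_one_right (norm_nonneg _) (Ω.norm_le_one_of_mem_Dball hξ)

theorem mkD_nonneg (x y : Ω.M) : 0 ≤ Ω.mkD x y :=
  Real.sSup_nonneg (by rintro _ ⟨ξ, -, -, rfl⟩; exact norm_nonneg _)

theorem mkD_self (x : Ω.M) : Ω.mkD x x = 0 :=
  (Real.sSup_nonpos (by rintro _ ⟨ξ, -, -, rfl⟩; simp)).antisymm (Ω.mkD_nonneg x x)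

theorem mkD_le_norm_sub (x y : Ω.M) : Ω.mkD x y ≤ ‖x - y‖ :=
  Real.sSup_le (by rintro _ ⟨ξ, hξ, hξ', rfl⟩; exact Ω.norm_inn_sub_inn_le ⟨hξ, hξ'⟩ x y)
    (norm_nonneg _)

theorem mkD_le_mkD_add_norm_sub (x x' y : Ω.M) : Ω.mkD x' y ≤ Ω.mkD x y + ‖x - x'‖ := by
  have hbdd : BddAbove {r | ∃ ξ ∈ Ω.Ddom, Ω.D ξ ≤ 1 ∧ r = ‖Ω.inn x ξ - Ω.inn y ξ‖} :=
    ⟨_, by rintro _ ⟨ξ, hξ, hξ', rfl⟩; exact Ω.norm_inn_sub_inn_le ⟨hξ, hξ'⟩ x y⟩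
  refine Real.sSup_le ?_ (add_nonneg (Ω.mkD_nonneg x y) (norm_nonneg _))
  rintro _ ⟨ξ, hξ, hξ', rfl⟩
  calc ‖Ω.inn x' ξ - Ω.inn y ξ‖
      ≤ ‖Ω.inn x' ξ - Ω.inn x ξ‖ + ‖Ω.inn x ξ - Ω.inn y ξ‖ :=
        norm_sub_le_norm_sub_add_norm_sub _ _ _
    _ ≤ ‖x' - x‖ + Ω.mkD x y :=
      add_le_add (Ω.norm_inn_sub_inn_le ⟨hξ, hξ'⟩ x' x) (le_csSup hbdd ⟨ξ, hξ, hξ', rfl⟩)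
    _ = Ω.mkD x y + ‖x - x'‖ := by rw [add_comm, norm_sub_rev]

theorem hausDist_mkD_range_restrict_le {ι : Type*} [Nonempty ι] {f : ι → Ω.M}
    (hf : ∀ i, f i ∈ Ω.Dball 1) (s : Set ι) {ε : ℝ} (hε : 0 ≤ ε)
    (hnet : ∀ i, ∃ j ∈ s, ‖f i - f j‖ ≤ ε) :
    hausDist Ω.mkD (Set.range fun j : s => f j) (Ω.Dball 1) ≤
      hausDist Ω.mkD (Set.range f) (Ω.Dball 1) + ε := by
  refine hausDist_le_hausDist_add_of_net Ω.mkD_nonneg Ω.mkD_self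
    (Set.range_subset_iff.2 fun j => hf j) (Set.range_nonempty f) (C := 2) ?_ hε ?_
  · rintro _ ⟨i, rfl⟩ y hy
    calc Ω.mkD (f i) y ≤ ‖f i - y‖ := Ω.mkD_le_norm_sub _ y
      _ ≤ ‖f i‖ + ‖y‖ := norm_sub_le _ y
      _ ≤ 2 := by linarith [Ω.norm_le_one_of_mem_Dball (hf i), Ω.norm_le_one_of_mem_Dball hy]
  · rintro _ ⟨i, rfl⟩
    obtain ⟨j, hj, hij⟩ := hnet i
    exact ⟨f j, ⟨⟨j, hj⟩, rfl⟩, fun y _ => (Ω.mkD_le_mkD_add_norm_sub _ _ y).trans (by linarith)⟩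

end BundledMQVB

namespace ModularBridge

variable {ΩA ΩB : BundledMQVB F G H} (γ : ModularBridge ΩA ΩB)

theorem anchors_mem_Dball (j : γ.J) : γ.anchors j ∈ ΩA.Dball 1 :=
  ⟨γ.anchors_mem j, γ.anchors_le j⟩

theorem coanchors_mem_Dball (j : γ.J) : γ.coanchors j ∈ ΩB.Dball 1 :=
  ⟨γ.coanchors_mem j, γ.coanchors_le j⟩

theorem bn_le_norm_add_norm (a : ΩA.A) (b : ΩB.A) : γ.bn a b ≤ ‖a‖ + ‖b‖ := by
  let : CStarAlgebra ΩA.A := {}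
  let : CStarAlgebra ΩB.A := {}
  let : CStarAlgebra γ.Dalg := {}
  calc γ.bn a b ≤ ‖γ.piA a‖ * ‖γ.pivot‖ + ‖γ.pivot‖ * ‖γ.piB b‖ :=
        (norm_sub_le _ _).trans (add_le_add (norm_mul_le _ _) (norm_mul_le _ _))
    _ ≤ ‖a‖ + ‖b‖ := by
        rw [γ.pivot_norm, mul_one, one_mul]
        exact add_le_add (NonUnitalStarAlgHom.norm_apply_le γ.piA a)
          (NonUnitalStarAlgHom.norm_apply_le γ.piB b)

theorem bn_inn_le_two {ω ω' : ΩA.M} {η η' : ΩB.M} (hω : ω ∈ ΩA.Dball 1)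
    (hω' : ω' ∈ ΩA.Dball 1) (hη : η ∈ ΩB.Dball 1) (hη' : η' ∈ ΩB.Dball 1) :
    γ.bn (ΩA.inn ω ω') (ΩB.inn η η') ≤ 2 := by
  linarith [γ.bn_le_norm_add_norm (ΩA.inn ω ω') (ΩB.inn η η'), ΩA.norm_inn_le_one hω hω',
    ΩB.norm_inn_le_one hη hη']

theorem dn_summand_le_two {ω : ΩA.M} {η : ΩB.M} (hω : ω ∈ ΩA.Dball 1)
    (hη : η ∈ ΩB.Dball 1) (k : γ.J) :
    max (γ.bn (ΩA.inn ω (γ.anchors k)) (ΩB.inn η (γ.coanchors k)))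
      (γ.bn (ΩA.inn (γ.anchors k) ω) (ΩB.inn (γ.coanchors k) η)) ≤ 2 := by
  have hωk := γ.anchors_mem_Dball k
  have hηk := γ.coanchors_mem_Dball k
  exact max_le (γ.bn_inn_le_two hω hωk hη hηk) (γ.bn_inn_le_two hωk hω hηk hη)

theorem dn_bddAbove {ω : ΩA.M} {η : ΩB.M} (hω : ω ∈ ΩA.Dball 1) (hη : η ∈ ΩB.Dball 1) :
    BddAbove (Set.range fun k : γ.J =>
      max (γ.bn (ΩA.inn ω (γ.anchors k)) (ΩB.inn η (γ.coanchors k)))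
        (γ.bn (ΩA.inn (γ.anchors k) ω) (ΩB.inn (γ.coanchors k) η))) :=
  ⟨2, by rintro _ ⟨k, rfl⟩; exact γ.dn_summand_le_two hω hη k⟩

theorem modularReach_bddAbove :
    BddAbove (Set.range fun j : γ.J => γ.dn (γ.anchors j) (γ.coanchors j)) :=
  ⟨2, by
    rintro _ ⟨j, rfl⟩
    exact ciSup_le (γ.dn_summand_le_two (γ.anchors_mem_Dball j) (γ.coanchors_mem_Dball j))⟩

def restrict (s : Set γ.J) [hs : Nonempty s] : ModularBridge ΩA ΩB where
  Dalg := γ.Dalg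
  J := s
  instJ := hs
  pivot := γ.pivot
  piA := γ.piA
  piB := γ.piB
  piA_inj := γ.piA_inj
  piB_inj := γ.piB_inj
  pivot_norm := γ.pivot_norm
  levelSet_nonempty := γ.levelSet_nonempty
  anchors j := γ.anchors j
  coanchors j := γ.coanchors j
  anchors_mem j := γ.anchors_mem j
  anchors_le j := γ.anchors_le j
  coanchors_mem j := γ.coanchors_mem j
  coanchors_le j := γ.coanchors_le j

variable (s : Set γ.J) [Nonempty s]

theorem modularReach_restrict_le : (γ.restrict s).modularReach ≤ γ.modularReach := by
  refine ciSup_le fun (j : s) => ciSup_le fun (k : s) => ?_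
  exact (le_ciSup (γ.dn_bddAbove (γ.anchors_mem_Dball j) (γ.coanchors_mem_Dball j)) k.1).trans
    (le_ciSup γ.modularReach_bddAbove j.1)

theorem imprint_restrict_le {ε : ℝ} (hε : 0 ≤ ε)
    (hnet : ∀ i, ∃ j ∈ s, ‖γ.anchors i - γ.anchors j‖ ≤ ε ∧
      ‖γ.coanchors i - γ.coanchors j‖ ≤ ε) :
    (γ.restrict s).imprint ≤ γ.imprint + ε := by
  have hA := ΩA.hausDist_mkD_range_restrict_le γ.anchors_mem_Dball s hε fun i =>
    (hnet i).imp fun _ h => ⟨h.1, h.2.1⟩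
  have hB := ΩB.hausDist_mkD_range_restrict_le γ.coanchors_mem_Dball s hε fun i =>
    (hnet i).imp fun _ h => ⟨h.1, h.2.2⟩
  exact max_le (hA.trans (by gcongr; exact le_max_left _ _))
    (hB.trans (by gcongr; exact le_max_right _ _))

theorem length_restrict_le {ε : ℝ} (hε : 0 ≤ ε)
    (hnet : ∀ i, ∃ j ∈ s, ‖γ.anchors i - γ.anchors j‖ ≤ ε ∧
      ‖γ.coanchors i - γ.coanchors j‖ ≤ ε) :
    (γ.restrict s).length ≤ γ.length + ε := by
  have hmod := γ.modularReach_restrict_le s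
  have himp := γ.imprint_restrict_le s hε hnet
  have hbasic : γ.basicReach ≤ γ.length := (le_max_left _ _).trans (le_max_left _ _)
  have hreach : γ.modularReach + γ.imprint ≤ γ.length :=
    (le_max_right _ _).trans (le_max_left _ _)
  have hheight : γ.height ≤ γ.length := le_max_right _ _
  change max (max γ.basicReach ((γ.restrict s).modularReach + (γ.restrict s).imprint))
    γ.height ≤ γ.length + ε
  exact max_le (max_le (by linarith) (by linarith)) (by linarith)

theorem totallyBounded_range_anchors_coanchors :
    TotallyBounded (Set.range fun j => (γ.anchors j, γ.coanchors j)) :=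
  (ΩA.D_ball_compact.prod ΩB.D_ball_compact).totallyBounded.subset <|
    Set.range_subset_iff.2 fun j =>
      Set.mk_mem_prod (γ.anchors_mem_Dball j) (γ.coanchors_mem_Dball j)

end ModularBridge

theorem statement11_general {F : ℝ → ℝ → ℝ → ℝ → ℝ} {G : ℝ → ℝ → ℝ → ℝ} {H : ℝ → ℝ → ℝ}
    {ΩA ΩB : BundledMQVB F G H} (γ : ModularBridge ΩA ΩB) (ε : ℝ) (hε : 0 < ε) :
    ∃ (J' : Type) (hJ' : Nonempty J') (_ : Finite J')
      (anch : J' → ΩA.M) (coanch : J' → ΩB.M)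
      (h1 : ∀ j, anch j ∈ ΩA.Ddom) (h2 : ∀ j, ΩA.D (anch j) ≤ 1)
      (h3 : ∀ j, coanch j ∈ ΩB.Ddom) (h4 : ∀ j, ΩB.D (coanch j) ≤ 1),
      (ModularBridge.mk (Dalg := γ.Dalg) (J := J') (instJ := hJ') (pivot := γ.pivot)
          (piA := γ.piA) (piB := γ.piB) (piA_inj := γ.piA_inj) (piB_inj := γ.piB_inj)
          (pivot_norm := γ.pivot_norm) (levelSet_nonempty := γ.levelSet_nonempty)
          (anchors := anch) (coanchors := coanch) (anchors_mem := h1) (anchors_le := h2)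
          (coanchors_mem := h3) (coanchors_le := h4) :
        ModularBridge ΩA ΩB).length ≤ γ.length + ε := by
  obtain ⟨s, hs, hnet⟩ :=
    exists_finite_net_of_totallyBounded_range γ.totallyBounded_range_anchors_coanchors hε
  have hnet' : ∀ i, ∃ j ∈ s, ‖γ.anchors i - γ.anchors j‖ ≤ ε ∧
      ‖γ.coanchors i - γ.coanchors j‖ ≤ ε := by
    intro i
    obtain ⟨j, hj, hij⟩ := hnet i
    rw [Prod.dist_eq, max_lt_iff, dist_eq_norm, dist_eq_norm] at hij
    exact ⟨j, hj, hij.1.le, hij.2.le⟩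
  obtain ⟨j₀, hj₀, -⟩ := hnet' (Classical.arbitrary γ.J)
  have hsne : Nonempty s := ⟨⟨j₀, hj₀⟩⟩
  exact ⟨s, hsne, hs.to_subtype, _, _, _, _, _, _, γ.length_restrict_le s hε.le hnet'⟩

/-- for every `ε > 0` there is a modular bridge with the same bridge algebra,
pivot and embeddings as `γ`, with finitely many anchors and co-anchors, and of length at
most `λ(γ) + ε`. -/
theorem statement11 {F : ℝ → ℝ → ℝ → ℝ → ℝ} {G : ℝ → ℝ → ℝ → ℝ} {H : ℝ → ℝ → ℝ}
    (hFGH : AdmissibleTriple F G H)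
    {ΩA ΩB : BundledMQVB F G H} (γ : ModularBridge ΩA ΩB) (ε : ℝ) (hε : 0 < ε) :
    ∃ (J' : Type) (hJ' : Nonempty J') (_ : Finite J')
      (anch : J' → ΩA.M) (coanch : J' → ΩB.M)
      (h1 : ∀ j, anch j ∈ ΩA.Ddom) (h2 : ∀ j, ΩA.D (anch j) ≤ 1)
      (h3 : ∀ j, coanch j ∈ ΩB.Ddom) (h4 : ∀ j, ΩB.D (coanch j) ≤ 1),
      (ModularBridge.mk (Dalg := γ.Dalg) (J := J') (instJ := hJ') (pivot := γ.pivot)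
          (piA := γ.piA) (piB := γ.piB) (piA_inj := γ.piA_inj) (piB_inj := γ.piB_inj)
          (pivot_norm := γ.pivot_norm) (levelSet_nonempty := γ.levelSet_nonempty)
          (anchors := anch) (coanchors := coanch) (anchors_mem := h1) (anchors_le := h2)
          (coanchors_mem := h3) (coanchors_le := h4) :
        ModularBridge ΩA ΩB).length ≤ γ.length + ε :=
  statement11_general γ ε hε
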